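/- arXiv:1601.03811 — 3 statements merged into one kernel-verified Lean document; each statement's English description precedes it below -/
import Mathlib

section
/- The function H : (0, 2M) → ℝ given by H(r_0) = (2 r_0 - 3M)/(3 √(r_0^3 (2M - r_0))) is strictly increasing, tends to -∞ as r_0 → 0+, and tends to +∞ as r_0 → 2M-. In particular, for every H ∈ ℝ there is a unique r_H ∈ (0, 2M) with H(r_H) = H. -/
/-!
With `P(r) = r³(2M - r)`, the derivative of `H = (2r - 3M) / (3√P)` simplifies to
`H'(r) = r²(2(r - 2M)² + M²) / (3 (√P)³)`, which is positive on `(0, 2M)`.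
At both endpoints `P` vanishes while the numerator tends to `-3M < 0` resp. `M > 0`,
giving the limits `∓∞`. A continuous strictly increasing function with these limits is a
bijection onto `ℝ`.
-/

open Filter Set Topology

theorem StrictMonoOn.existsUnique_eq_of_tendsto {α δ : Type*} [ConditionallyCompleteLinearOrder α]
    [TopologicalSpace α] [OrderTopology α] [DenselyOrdered α] [LinearOrder δ]
    [TopologicalSpace δ] [OrderClosedTopology δ] {f : α → δ} {a b : α} (hab : a < b)
    (hmono : StrictMonoOn f (Ioo a b)) (hcont : ContinuousOn f (Ioo a b))
    (hbot : Tendsto f (𝓝[>] a) atBot) (htop : Tendsto f (𝓝[<] b) atTop) (y : δ) :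
    ∃! x, x ∈ Ioo a b ∧ f x = y := by
  obtain ⟨x, hx, rfl⟩ := hcont.surjOn_of_tendsto (nonempty_Ioo.2 hab)
    ((tendsto_comp_coe_Ioo_atBot hab).2 hbot) ((tendsto_comp_coe_Ioo_atTop hab).2 htop)
    (mem_univ y)
  exact ⟨x, ⟨hx, rfl⟩, fun x' ⟨hx', hfx'⟩ => hmono.injOn hx' hx hfx'⟩

noncomputable def sliceMeanCurvature (M r : ℝ) : ℝ :=
  (2 * r - 3 * M) / (3 * Real.sqrt (r ^ 3 * (2 * M - r)))

namespace sliceMeanCurvature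

variable {M r : ℝ}

theorem radicand_pos (hr : r ∈ Ioo 0 (2 * M)) : 0 < r ^ 3 * (2 * M - r) :=
  mul_pos (pow_pos hr.1 3) (sub_pos.2 hr.2)

theorem hasDerivAt (hr : r ∈ Ioo 0 (2 * M)) :
    HasDerivAt (sliceMeanCurvature M)
      (r ^ 2 * (2 * (r - 2 * M) ^ 2 + M ^ 2) / (3 * Real.sqrt (r ^ 3 * (2 * M - r)) ^ 3)) r := by
  have hP := radicand_pos hr
  have hs : 0 < Real.sqrt (r ^ 3 * (2 * M - r)) := Real.sqrt_pos.2 hP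
  have hsq : Real.sqrt (r ^ 3 * (2 * M - r)) ^ 2 = r ^ 3 * (2 * M - r) := Real.sq_sqrt hP.le
  have hnum : HasDerivAt (fun x => 2 * x - 3 * M) 2 r := by
    simpa using ((hasDerivAt_id r).const_mul 2).sub_const (3 * M)
  have hrad : HasDerivAt (fun x => x ^ 3 * (2 * M - x)) (3 * r ^ 2 * (2 * M - r) - r ^ 3) r := by
    have := (hasDerivAt_pow 3 r).mul ((hasDerivAt_id r).const_sub (2 * M))
    simp only [Nat.cast_ofNat, id_eq] at this
    exact this.congr_deriv (by ring)
  have hden := (hrad.sqrt hP.ne').const_mul 3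
  refine (hnum.div hden (by positivity)).congr_deriv ?_
  field_simp
  linear_combination 4 * hsq

theorem continuousOn : ContinuousOn (sliceMeanCurvature M) (Ioo 0 (2 * M)) :=
  fun _ hr => (hasDerivAt hr).continuousAt.continuousWithinAt

theorem strictMonoOn (hM : 0 < M) : StrictMonoOn (sliceMeanCurvature M) (Ioo 0 (2 * M)) := by
  refine strictMonoOn_of_deriv_pos (convex_Ioo _ _) continuousOn fun r hr => ?_
  rw [interior_Ioo] at hr
  rw [(hasDerivAt hr).deriv]
  have hs : 0 < Real.sqrt (r ^ 3 * (2 * M - r)) := Real.sqrt_pos.2 (radicand_pos hr)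
  exact div_pos (mul_pos (pow_pos hr.1 2) (by positivity)) (by positivity)

theorem tendsto_denominator {a : ℝ} {l : Filter ℝ} (hla : l ≤ 𝓝 a)
    (ha : a ^ 3 * (2 * M - a) = 0) (hl : Ioo 0 (2 * M) ∈ l) :
    Tendsto (fun r => 3 * Real.sqrt (r ^ 3 * (2 * M - r))) l (𝓝[>] 0) := by
  refine tendsto_nhdsWithin_iff.2 ⟨?_, ?_⟩
  · have hcont : Continuous fun r : ℝ => 3 * Real.sqrt (r ^ 3 * (2 * M - r)) := by fun_prop
    simpa [ha] using (hcont.tendsto a).mono_left hla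
  · filter_upwards [hl] with r hr
    exact mul_pos three_pos (Real.sqrt_pos.2 (radicand_pos hr))

theorem tendsto_atBot (hM : 0 < M) : Tendsto (sliceMeanCurvature M) (𝓝[>] 0) atBot := by
  have hnum : Tendsto (fun r => 2 * r - 3 * M) (𝓝[>] 0) (𝓝 (-(3 * M))) :=
    (Continuous.tendsto' (by fun_prop) 0 _ (by ring)).mono_left nhdsWithin_le_nhds
  have hden := tendsto_denominator nhdsWithin_le_nhds (by ring) (Ioo_mem_nhdsGT (by linarith))
  exact hnum.neg_mul_atTop (by linarith) hden.inv_tendsto_nhdsGT_zero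

theorem tendsto_atTop (hM : 0 < M) : Tendsto (sliceMeanCurvature M) (𝓝[<] (2 * M)) atTop := by
  have hnum : Tendsto (fun r => 2 * r - 3 * M) (𝓝[<] (2 * M)) (𝓝 M) :=
    (Continuous.tendsto' (by fun_prop) (2 * M) _ (by ring)).mono_left nhdsWithin_le_nhds
  have hden := tendsto_denominator nhdsWithin_le_nhds (by ring) (Ioo_mem_nhdsLT (by linarith))
  exact hnum.pos_mul_atTop hM hden.inv_tendsto_nhdsGT_zero

end sliceMeanCurvature

/-- `H(r₀) = (2r₀ - 3M)/(3√(r₀³(2M - r₀)))` is strictly increasing on `(0, 2M)`,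
tends to `-∞` as `r₀ → 0⁺`, to `+∞` as `r₀ → 2M⁻`, and every `H ∈ ℝ` is attained
at a unique `r_H ∈ (0, 2M)`. -/
theorem stmt5 (M : ℝ) (hM : 0 < M) :
    StrictMonoOn (fun r0 : ℝ => (2 * r0 - 3 * M) / (3 * Real.sqrt (r0 ^ 3 * (2 * M - r0))))
      (Set.Ioo 0 (2 * M)) ∧
    Filter.Tendsto (fun r0 : ℝ => (2 * r0 - 3 * M) / (3 * Real.sqrt (r0 ^ 3 * (2 * M - r0))))
      (nhdsWithin 0 (Set.Ioi 0)) Filter.atBot ∧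
    Filter.Tendsto (fun r0 : ℝ => (2 * r0 - 3 * M) / (3 * Real.sqrt (r0 ^ 3 * (2 * M - r0))))
      (nhdsWithin (2 * M) (Set.Iio (2 * M))) Filter.atTop ∧
    ∀ H : ℝ, ∃! r : ℝ, r ∈ Set.Ioo (0 : ℝ) (2 * M) ∧
      (2 * r - 3 * M) / (3 * Real.sqrt (r ^ 3 * (2 * M - r))) = H :=
  ⟨sliceMeanCurvature.strictMonoOn hM, sliceMeanCurvature.tendsto_atBot hM,
    sliceMeanCurvature.tendsto_atTop hM,
    (sliceMeanCurvature.strictMonoOn hM).existsUnique_eq_of_tendsto (by linarith)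
      sliceMeanCurvature.continuousOn (sliceMeanCurvature.tendsto_atBot hM)
      (sliceMeanCurvature.tendsto_atTop hM)⟩
end

section
/- Let M > 0, H ∈ ℝ, c < -8M^3 H, and define for r ∈ (2M, ∞) the function f̄'(r) = r^4 / ((H r^3 + c)^2 + r^3 (r - 2M) - (H r^3 + c) √((H r^3 + c)^2 + r^3(r - 2M))). Then f̄'(r) > 0 for all r ∈ (2M, ∞), and f̄' extends continuously to r = 2M with a finite positive value: the denominator at r = 2M equals (8M^3H + c)^2 − (8M^3H + c)|8M^3H + c| = 2(8M^3H + c)^2 > 0, so f̄'(2M) = (2M)^4 / (2(8M^3 H + c)^2). -/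
/-- For `c < -8M³H`, the function
`f̄'(r) = r⁴ / ((Hr³+c)² + r³(r-2M) - (Hr³+c)√((Hr³+c)² + r³(r-2M)))` is positive on
`(2M, ∞)`, its denominator at `r = 2M` equals `2(8M³H + c)² > 0`, and `f̄'` extends
continuously to `r = 2M` with value `(2M)⁴ / (2(8M³H + c)²)`. -/
theorem stmt7 (M H c : ℝ) (hM : 0 < M) (hc : c < -(8 * M ^ 3 * H)) :
    (∀ r ∈ Set.Ioi (2 * M),
      0 < r ^ 4 / ((H * r ^ 3 + c) ^ 2 + r ^ 3 * (r - 2 * M)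
          - (H * r ^ 3 + c) * Real.sqrt ((H * r ^ 3 + c) ^ 2 + r ^ 3 * (r - 2 * M)))) ∧
    ((H * (2 * M) ^ 3 + c) ^ 2 + (2 * M) ^ 3 * (2 * M - 2 * M)
        - (H * (2 * M) ^ 3 + c) *
            Real.sqrt ((H * (2 * M) ^ 3 + c) ^ 2 + (2 * M) ^ 3 * (2 * M - 2 * M))
      = 2 * (8 * M ^ 3 * H + c) ^ 2) ∧
    0 < 2 * (8 * M ^ 3 * H + c) ^ 2 ∧
    Filter.Tendsto (fun r : ℝ => r ^ 4 / ((H * r ^ 3 + c) ^ 2 + r ^ 3 * (r - 2 * M)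
        - (H * r ^ 3 + c) * Real.sqrt ((H * r ^ 3 + c) ^ 2 + r ^ 3 * (r - 2 * M))))
      (nhdsWithin (2 * M) (Set.Ioi (2 * M)))
      (nhds ((2 * M) ^ 4 / (2 * (8 * M ^ 3 * H + c) ^ 2))) := by
  have hA : 8 * M ^ 3 * H + c < 0 := by linarith
  have hA2M : H * (2 * M) ^ 3 + c = 8 * M ^ 3 * H + c := by ring
  -- denominator value at 2M
  have hden2M : (H * (2 * M) ^ 3 + c) ^ 2 + (2 * M) ^ 3 * (2 * M - 2 * M)
        - (H * (2 * M) ^ 3 + c) *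
            Real.sqrt ((H * (2 * M) ^ 3 + c) ^ 2 + (2 * M) ^ 3 * (2 * M - 2 * M))
      = 2 * (8 * M ^ 3 * H + c) ^ 2 := by
    rw [hA2M]
    have : (8 * M ^ 3 * H + c) ^ 2 + (2 * M) ^ 3 * (2 * M - 2 * M)
        = (8 * M ^ 3 * H + c) ^ 2 := by ring
    rw [this, Real.sqrt_sq_eq_abs, abs_of_neg hA]
    ring
  have hpos2 : 0 < 2 * (8 * M ^ 3 * H + c) ^ 2 := by nlinarith [mul_pos (neg_pos.mpr hA) (neg_pos.mpr hA)]
  -- positivity of denominator on Ioi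
  have hdenpos : ∀ r ∈ Set.Ioi (2 * M),
      0 < (H * r ^ 3 + c) ^ 2 + r ^ 3 * (r - 2 * M)
          - (H * r ^ 3 + c) * Real.sqrt ((H * r ^ 3 + c) ^ 2 + r ^ 3 * (r - 2 * M)) := by
    intro r hr
    simp only [Set.mem_Ioi] at hr
    set A := H * r ^ 3 + c with hAdef
    have hr0 : 0 < r := by linarith
    have hB : 0 < r ^ 3 * (r - 2 * M) := by
      apply mul_pos (by positivity); linarith
    set S := Real.sqrt (A ^ 2 + r ^ 3 * (r - 2 * M)) with hSdef
    have hSsq : S ^ 2 = A ^ 2 + r ^ 3 * (r - 2 * M) :=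
      Real.sq_sqrt (by positivity)
    have hSgt : |A| < S := by
      rw [hSdef, ← Real.sqrt_sq_eq_abs]
      exact Real.sqrt_lt_sqrt (sq_nonneg A) (by linarith)
    have hS0 : 0 < S := lt_of_le_of_lt (abs_nonneg A) hSgt
    have hSA : A < S := lt_of_le_of_lt (le_abs_self A) hSgt
    have : A ^ 2 + r ^ 3 * (r - 2 * M) - A * S = S * (S - A) := by
      rw [← hSsq]; ring
    rw [this]
    exact mul_pos hS0 (by linarith)
  refine ⟨fun r hr => div_pos (pow_pos (lt_trans (by linarith : (0:ℝ) < 2*M) (Set.mem_Ioi.mp hr)) 4) (hdenpos r hr), hden2M, hpos2, ?_⟩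
  -- continuity
  have hcont : ContinuousAt (fun r : ℝ => r ^ 4 / ((H * r ^ 3 + c) ^ 2 + r ^ 3 * (r - 2 * M)
        - (H * r ^ 3 + c) * Real.sqrt ((H * r ^ 3 + c) ^ 2 + r ^ 3 * (r - 2 * M)))) (2 * M) := by
    apply ContinuousAt.div
    · fun_prop
    · fun_prop
    · rw [hden2M]; exact ne_of_gt hpos2
  have := hcont.tendsto
  rw [hden2M] at this
  exact this.mono_left nhdsWithin_le_nhds
end

section
/- Let M > 0, H ∈ ℝ, c > -8M^3 H, and define for r ∈ (2M, ∞) the function f̃'(r) = -r^4 / ((H r^3 + c)^2 + r^3(r - 2M) + (H r^3 + c)√((H r^3 + c)^2 + r^3(r - 2M))). Then f̃'(r) < 0 for all r ∈ (2M, ∞) near 2M, and the denominator at r = 2M equals 2(8M^3 H + c)^2 > 0, so f̃' extends continuously to r = 2M. -/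
/-! With `a = Hr³ + c` and `k = r³(r - 2M)`, the denominator is `a² + k + a√(a² + k)`.
For `k > 0` we have `√(a² + k) > |a|`, so the denominator `√(a² + k)(√(a² + k) + a)` is positive
on all of `(2M, ∞)`; at `r = 2M` it is `a² + a|a| = 2a²` because `a = 8M³H + c > 0`, and continuity
of the expression at `2M` gives the limit. -/

theorem sq_add_add_mul_sqrt_pos (a : ℝ) {k : ℝ} (hk : 0 < k) :
    0 < a ^ 2 + k + a * √(a ^ 2 + k) := by
  have habs : |a| < √(a ^ 2 + k) :=
    (Real.lt_sqrt (abs_nonneg a)).2 (by rw [sq_abs]; linarith)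
  have hsq : √(a ^ 2 + k) ^ 2 = a ^ 2 + k := Real.sq_sqrt (by positivity)
  nlinarith [neg_abs_le a, abs_nonneg a]

theorem sq_add_mul_sqrt_sq {a : ℝ} (ha : 0 ≤ a) : a ^ 2 + a * √(a ^ 2) = 2 * a ^ 2 := by
  rw [Real.sqrt_sq ha]
  ring

/-- For `c > -8M³H`, the function
`f̃'(r) = -r⁴ / ((Hr³+c)² + r³(r-2M) + (Hr³+c)√((Hr³+c)² + r³(r-2M)))` is negative
near `r = 2M` in `(2M, ∞)`, its denominator at `r = 2M` equals `2(8M³H + c)² > 0`,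
and `f̃'` extends continuously to `r = 2M`. -/
theorem stmt8 (M H c : ℝ) (hM : 0 < M) (hc : -(8 * M ^ 3 * H) < c) :
    (∀ᶠ r in nhdsWithin (2 * M) (Set.Ioi (2 * M)),
      -r ^ 4 / ((H * r ^ 3 + c) ^ 2 + r ^ 3 * (r - 2 * M)
          + (H * r ^ 3 + c) * Real.sqrt ((H * r ^ 3 + c) ^ 2 + r ^ 3 * (r - 2 * M))) < 0) ∧
    ((H * (2 * M) ^ 3 + c) ^ 2 + (2 * M) ^ 3 * (2 * M - 2 * M)
        + (H * (2 * M) ^ 3 + c) *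
            Real.sqrt ((H * (2 * M) ^ 3 + c) ^ 2 + (2 * M) ^ 3 * (2 * M - 2 * M))
      = 2 * (8 * M ^ 3 * H + c) ^ 2) ∧
    0 < 2 * (8 * M ^ 3 * H + c) ^ 2 ∧
    Filter.Tendsto (fun r : ℝ => -r ^ 4 / ((H * r ^ 3 + c) ^ 2 + r ^ 3 * (r - 2 * M)
        + (H * r ^ 3 + c) * Real.sqrt ((H * r ^ 3 + c) ^ 2 + r ^ 3 * (r - 2 * M))))
      (nhdsWithin (2 * M) (Set.Ioi (2 * M)))
      (nhds (-(2 * M) ^ 4 / (2 * (8 * M ^ 3 * H + c) ^ 2))) := by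
  have hA : H * (2 * M) ^ 3 + c = 8 * M ^ 3 * H + c := by ring
  have hpos : 0 < 8 * M ^ 3 * H + c := by linarith
  have hden : (H * (2 * M) ^ 3 + c) ^ 2 + (2 * M) ^ 3 * (2 * M - 2 * M)
      + (H * (2 * M) ^ 3 + c) *
          Real.sqrt ((H * (2 * M) ^ 3 + c) ^ 2 + (2 * M) ^ 3 * (2 * M - 2 * M))
      = 2 * (8 * M ^ 3 * H + c) ^ 2 := by
    rw [sub_self, mul_zero, add_zero, sq_add_mul_sqrt_sq (hA ▸ hpos.le), hA]
  have hden_pos : 0 < 2 * (8 * M ^ 3 * H + c) ^ 2 := by positivity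
  refine ⟨?_, hden, hden_pos, ?_⟩
  · filter_upwards [self_mem_nhdsWithin] with r (hr : 2 * M < r)
    have hr : 0 < r := by linarith
    exact div_neg_of_neg_of_pos (neg_neg_of_pos (pow_pos hr 4))
      (sq_add_add_mul_sqrt_pos _ (mul_pos (pow_pos hr 3) (by linarith)))
  · have hcont : ContinuousAt (fun r : ℝ => -r ^ 4 / ((H * r ^ 3 + c) ^ 2 + r ^ 3 * (r - 2 * M)
        + (H * r ^ 3 + c) * Real.sqrt ((H * r ^ 3 + c) ^ 2 + r ^ 3 * (r - 2 * M)))) (2 * M) :=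
      ContinuousAt.div (by fun_prop) (by fun_prop) (by rw [hden]; exact hden_pos.ne')
    simpa only [hden] using hcont.continuousWithinAt.tendsto
end
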